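/- Let G be a simple graph on n vertices with m edges, and let S_k be any set of k vertices of G of largest degrees (i.e., ordering the vertices v₁,…,vₙ so that deg(v₁) ≥ ⋯ ≥ deg(vₙ), take S_k = {v₁,…,v_k}). Then s_k(G) ≤ m + e(S_k) − e(V(G)∖S_k) + ‖A(G)‖_(k), where e(S) denotes the number of edges of G with both endpoints in S and ‖A(G)‖_(k) is the sum of the k largest singular values (equivalently, the k largest absolute values of eigenvalues) of the adjacency matrix A(G). -/

import Mathlib

/-!
Let `u_j` (`j ∈ T`, `|T| = k`) be orthonormal eigenvectors of `L = D - A`. Then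
`∑_{j ∈ T} μ_j = ∑_j u_jᵀ D u_j - ∑_j u_jᵀ A u_j`, and both terms are weighted sums `∑ w_i f_i`
with weights in the hypersimplex `{0 ≤ w ≤ 1, ∑ w = k}`: `w_v = ∑_j u_j(v)²` against the degrees,
and `w_i = ∑_j ⟨u_j, a_i⟩²` against the adjacency eigenvalues `ν_i` (eigenvectors `a_i`). A linear
function on the hypersimplex is maximised at a vertex, so the first term is at most `∑_{v ∈ S} d_v`,
and minus the second is at most `∑ w_i |ν_i| ≤ ‖A‖_(k)`. Finally `∑_{v ∈ S} d_v = m + e(S) - e(Sᶜ)`,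
since an edge has `[e ⊆ S] + 1 - [e ⊆ Sᶜ]` endpoints in `S`.
-/

open Finset

namespace Brouwer

variable {V : Type*}

/-- The sum of the `k` largest values of `f` on a finite type, expressed as the
supremum over all `k`-element subsets of the sum of `f` over the subset. -/
noncomputable def sumKLargest [Fintype V] (f : V → ℝ) (k : ℕ) : ℝ :=
  sSup { x : ℝ | ∃ T : Finset V, T.card = k ∧ ∑ i ∈ T, f i = x }

/-- The Laplacian matrix of a finite simple graph is Hermitian (real symmetric). -/
theorem lapMatrix_isHermitian [Fintype V] [DecidableEq V] (G : SimpleGraph V)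
    [DecidableRel G.Adj] : (G.lapMatrix ℝ).IsHermitian := by
  rw [Matrix.IsHermitian, Matrix.conjTranspose_eq_transpose_of_trivial]
  exact G.isSymm_lapMatrix ℝ

/-- The adjacency matrix of a finite simple graph is Hermitian (real symmetric). -/
theorem adjMatrix_isHermitian [Fintype V] [DecidableEq V] (G : SimpleGraph V)
    [DecidableRel G.Adj] : (G.adjMatrix ℝ).IsHermitian := by
  rw [Matrix.IsHermitian, Matrix.conjTranspose_eq_transpose_of_trivial]
  exact G.isSymm_adjMatrix

/-- The (multiset of) eigenvalues of the Laplacian matrix of `G`, indexed by vertices. -/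
noncomputable def lapEig [Fintype V] [DecidableEq V] (G : SimpleGraph V) : V → ℝ := by
  classical exact (lapMatrix_isHermitian G).eigenvalues

/-- The (multiset of) eigenvalues of the adjacency matrix of `G`, indexed by vertices. -/
noncomputable def adjEig [Fintype V] [DecidableEq V] (G : SimpleGraph V) : V → ℝ := by
  classical exact (adjMatrix_isHermitian G).eigenvalues

/-- `sLap G k` is `s_k(G)`, the sum of the `k` largest Laplacian eigenvalues of `G`. -/
noncomputable def sLap [Fintype V] [DecidableEq V] (G : SimpleGraph V) (k : ℕ) : ℝ :=
  sumKLargest (lapEig G) k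

/-- The number of edges of `G`. -/
noncomputable def numEdges [Fintype V] (G : SimpleGraph V) : ℕ := by
  classical exact G.edgeFinset.card

/-- `BC G k`: Brouwer's conjectured inequality `s_k(G) ≤ m + (k+1 choose 2)`. -/
def BC [Fintype V] [DecidableEq V] (G : SimpleGraph V) (k : ℕ) : Prop :=
  sLap G k ≤ numEdges G + (k + 1).choose 2

/-- Number of edges of `G` with both endpoints in `S`. -/
noncomputable def edgesWithin [Fintype V] [DecidableEq V] (G : SimpleGraph V)
    (S : Finset V) : ℕ := by
  classical exact (G.edgeFinset.filter (fun e => ∀ v ∈ e, v ∈ S)).card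

/-- The adjacency spectral radius of `G`, i.e. the largest adjacency eigenvalue. -/
noncomputable def specRad [Fintype V] [DecidableEq V] (G : SimpleGraph V) : ℝ :=
  sumKLargest (adjEig G) 1

/-- The maximum subgraph spectral density `t(G)`:
the supremum of `ρ(G[S])/|S|` over nonempty vertex subsets `S`. -/
noncomputable def maxDensity [Fintype V] [DecidableEq V] (G : SimpleGraph V) : ℝ :=
  sSup { x : ℝ | ∃ S : Finset V, S.Nonempty ∧
    x = specRad (G.induce (↑S : Set V)) / (S.card : ℝ) }

/-- Edge-edit distance between two graphs on the same vertex set. -/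
noncomputable def editDistance [Fintype V] (G H : SimpleGraph V) : ℕ := by
  classical exact (symmDiff G.edgeFinset H.edgeFinset).card

/-- A split graph: the vertex set partitions into a clique and an independent set. -/
def IsSplit (G : SimpleGraph V) : Prop :=
  ∃ C : Set V, G.IsClique C ∧ Gᶜ.IsClique Cᶜ

/-- The splittance of `G`: the least number of edge edits needed to reach a split graph. -/
noncomputable def splittance [Fintype V] (G : SimpleGraph V) : ℕ :=
  sInf { d : ℕ | ∃ H : SimpleGraph V, IsSplit H ∧ editDistance G H = d }

/-- The join `G + K₁` of `G` with one new vertex adjacent to every vertex of `G`. -/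
def joinOne (G : SimpleGraph V) : SimpleGraph (Option V) where
  Adj x y := x ≠ y ∧ ∀ a, x = some a → ∀ b, y = some b → G.Adj a b
  symm := by
    constructor
    rintro x y ⟨hxy, h⟩
    exact ⟨hxy.symm, fun a ha b hb => (h b hb a ha).symm⟩
  loopless := by constructor; rintro x ⟨hxx, -⟩; exact hxx rfl

section SumKLargest

variable [Fintype V]

theorem le_sumKLargest (f : V → ℝ) (T : Finset V) : ∑ i ∈ T, f i ≤ sumKLargest f #T := by
  refine le_csSup (Set.Finite.bddAbove ?_) ⟨T, rfl, rfl⟩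
  exact (Set.finite_range fun T : Finset V => ∑ i ∈ T, f i).subset
    (by rintro _ ⟨T, -, rfl⟩; exact ⟨T, rfl⟩)

theorem sumKLargest_le {f : V → ℝ} {k : ℕ} (hk : k ≤ Fintype.card V) {c : ℝ}
    (h : ∀ T : Finset V, #T = k → ∑ i ∈ T, f i ≤ c) : sumKLargest f k ≤ c := by
  obtain ⟨T, -, hT⟩ := exists_subset_card_eq (s := (univ : Finset V)) (by simpa using hk)
  exact csSup_le ⟨_, T, hT, rfl⟩ (by rintro _ ⟨T, hT, rfl⟩; exact h T hT)

theorem exists_card_eq_forall_le (f : V → ℝ) {k : ℕ} (hk : k ≤ Fintype.card V) :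
    ∃ S : Finset V, #S = k ∧ ∀ v ∈ S, ∀ u ∉ S, f u ≤ f v := by
  classical
  have hne : (univ.powersetCard k : Finset (Finset V)).Nonempty :=
    powersetCard_nonempty.mpr (by simpa using hk)
  obtain ⟨S, hSk, hSmax⟩ := exists_max_image _ (fun T => ∑ i ∈ T, f i) hne
  rw [mem_powersetCard_univ] at hSk
  refine ⟨S, hSk, fun v hv u hu => ?_⟩
  have hu' : u ∉ S.erase v := fun h => hu (mem_of_mem_erase h)
  have hswap := hSmax (insert u (S.erase v)) <| mem_powersetCard_univ.mpr <| by
    rw [card_insert_of_notMem hu', card_erase_of_mem hv, ← hSk]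
    exact Nat.sub_add_cancel (card_pos.mpr ⟨v, hv⟩)
  rw [sum_insert hu', sum_erase_eq_sub hv] at hswap
  linarith

structure IsFractionalSubset (w : V → ℝ) (k : ℕ) : Prop where
  nonneg : ∀ v, 0 ≤ w v
  le_one : ∀ v, w v ≤ 1
  sum_eq : ∑ v, w v = k

namespace IsFractionalSubset

variable {w : V → ℝ} {k : ℕ}

theorem sum_mul_le_sum_of_forall_le {f : V → ℝ} {S : Finset V} (hw : IsFractionalSubset w #S)
    (hS : ∀ v ∈ S, ∀ u ∉ S, f u ≤ f v) : ∑ v, w v * f v ≤ ∑ v ∈ S, f v := by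
  classical
  rcases S.eq_empty_or_nonempty with rfl | hne
  · have hw0 : ∀ v, w v = 0 := fun v =>
      (sum_eq_zero_iff_of_nonneg fun v _ => hw.nonneg v).mp (by simpa using hw.sum_eq) v
      (mem_univ v)
    simp [hw0]
  -- `c` separates the values of `f` on `S` from those off `S`, and `w - 𝟙_S` has total mass 0.
  set c := S.inf' hne f
  have hdiff : ∑ v, w v * f v - ∑ v ∈ S, f v
      = ∑ v, (w v - if v ∈ S then 1 else 0) * (f v - c) := by
    simp only [sub_mul, mul_sub, ite_mul, one_mul, zero_mul, sum_sub_distrib, ← sum_mul,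
      sum_ite_mem, univ_inter, hw.sum_eq, sum_const, nsmul_eq_mul]
    ring
  have hterm : ∀ v, (w v - if v ∈ S then 1 else 0) * (f v - c) ≤ 0 := by
    intro v
    by_cases hv : v ∈ S
    · simp only [hv, if_true]
      exact mul_nonpos_of_nonpos_of_nonneg (by linarith [hw.le_one v])
        (sub_nonneg.mpr (inf'_le f hv))
    · obtain ⟨v₀, hv₀, hc⟩ := exists_mem_eq_inf' hne f
      simp only [hv, if_false, sub_zero]
      exact mul_nonpos_of_nonneg_of_nonpos (hw.nonneg v) (by linarith [hS v₀ hv₀ v hv])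
  linarith [sum_nonpos fun v (_ : v ∈ univ) => hterm v]

theorem card_le (hw : IsFractionalSubset w k) : k ≤ Fintype.card V := by
  have : (k : ℝ) ≤ Fintype.card V := by
    simpa [hw.sum_eq] using sum_le_sum fun v (_ : v ∈ univ) => hw.le_one v
  exact_mod_cast this

theorem sum_mul_le_sumKLargest (hw : IsFractionalSubset w k) (f : V → ℝ) :
    ∑ v, w v * f v ≤ sumKLargest f k := by
  obtain ⟨S, rfl, hS⟩ := exists_card_eq_forall_le f hw.card_le
  exact (hw.sum_mul_le_sum_of_forall_le hS).trans (le_sumKLargest f S)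

end IsFractionalSubset

end SumKLargest

section Spectral

open Matrix

variable [Fintype V] [DecidableEq V]

theorem sum_diag_star_mul_diagonal_mul (P : Matrix V V ℝ) (ν : V → ℝ) (T : Finset V) :
    ∑ j ∈ T, (star P * diagonal ν * P) j j = ∑ i, (∑ j ∈ T, P i j ^ 2) * ν i := by
  simp only [mul_apply, diagonal_apply, star_apply, star_trivial, mul_ite, mul_zero,
    sum_ite_eq', mem_univ, if_true, sum_mul]
  rw [sum_comm]
  exact sum_congr rfl fun i _ => sum_congr rfl fun j _ => by ring

theorem isFractionalSubset_sum_sq (P : unitaryGroup V ℝ) (T : Finset V) :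
    IsFractionalSubset (fun i => ∑ j ∈ T, (P : Matrix V V ℝ) i j ^ 2) #T := by
  have hrow : ∀ i, ∑ j, (P : Matrix V V ℝ) i j ^ 2 = 1 := fun i => by
    simpa [mul_apply, sq, one_apply] using congrFun (congrFun P.2.2 i) i
  have hcol : ∀ j, ∑ i, (P : Matrix V V ℝ) i j ^ 2 = 1 := fun j => by
    simpa [mul_apply, sq, one_apply] using congrFun (congrFun P.2.1 j) j
  refine ⟨fun i => sum_nonneg fun j _ => sq_nonneg _, fun i => ?_, ?_⟩
  · exact (hrow i).symm ▸ sum_le_sum_of_subset_of_nonneg (subset_univ T) fun j _ _ => sq_nonneg _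
  · simp [sum_comm (s := univ), hcol]

theorem star_eigenvectorUnitary_mul_mul {A : Matrix V V ℝ} (hA : A.IsHermitian) :
    star (hA.eigenvectorUnitary : Matrix V V ℝ) * A * hA.eigenvectorUnitary
      = diagonal hA.eigenvalues := by
  simpa [Unitary.conjStarAlgAut_star_apply] using hA.conjStarAlgAut_star_eigenvectorUnitary

theorem sumKLargest_eigenvalues_diagonal_sub_le {d : V → ℝ} {A : Matrix V V ℝ}
    (hA : A.IsHermitian) (hL : (diagonal d - A).IsHermitian) {S : Finset V}
    (hS : ∀ v ∈ S, ∀ u ∉ S, d u ≤ d v) :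
    sumKLargest hL.eigenvalues #S
      ≤ ∑ v ∈ S, d v + sumKLargest (fun i => |hA.eigenvalues i|) #S := by
  refine sumKLargest_le (card_le_univ S) fun T hT => ?_
  have hdiagL := star_eigenvectorUnitary_mul_mul hL
  have hdiagA := star_eigenvectorUnitary_mul_mul hA
  set U := hL.eigenvectorUnitary
  set W := hA.eigenvectorUnitary
  set ν := hA.eigenvalues
  set P : unitaryGroup V ℝ := star W * U
  have hconj : star (U : Matrix V V ℝ) * A * U = star (P : Matrix V V ℝ) * diagonal ν * P := by
    have hWW : ∀ X, (W : Matrix V V ℝ) * (star (W : Matrix V V ℝ) * X) = X := fun X => by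
      rw [← mul_assoc, Unitary.mul_star_self_of_mem W.2, one_mul]
    rw [← hdiagA]
    simp only [P, Submonoid.coe_mul, Unitary.coe_star, star_mul, star_star, mul_assoc, hWW]
  have hμ : ∀ j, hL.eigenvalues j = (star (U : Matrix V V ℝ) * diagonal d * U) j j
      - (star (P : Matrix V V ℝ) * diagonal ν * P) j j := by
    intro j
    have := congrFun (congrFun hdiagL j) j
    rw [mul_sub, sub_mul, hconj] at this
    simpa using this.symm
  have hU := isFractionalSubset_sum_sq U T
  have hP := isFractionalSubset_sum_sq P T
  rw [hT] at hU hP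
  have hneg : -∑ i, (∑ j ∈ T, (P : Matrix V V ℝ) i j ^ 2) * ν i
      ≤ ∑ i, (∑ j ∈ T, (P : Matrix V V ℝ) i j ^ 2) * |ν i| := by
    rw [← sum_neg_distrib]
    exact sum_le_sum fun i _ => by
      rw [← mul_neg]; exact mul_le_mul_of_nonneg_left (neg_le_abs _) (hP.nonneg i)
  calc ∑ j ∈ T, hL.eigenvalues j
      = ∑ i, (∑ j ∈ T, (U : Matrix V V ℝ) i j ^ 2) * d i
        - ∑ i, (∑ j ∈ T, (P : Matrix V V ℝ) i j ^ 2) * ν i := by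
        simp only [hμ, sum_sub_distrib, sum_diag_star_mul_diagonal_mul]
    _ ≤ ∑ v ∈ S, d v + ∑ i, (∑ j ∈ T, (P : Matrix V V ℝ) i j ^ 2) * |ν i| := by
        linarith [hU.sum_mul_le_sum_of_forall_le hS]
    _ ≤ ∑ v ∈ S, d v + sumKLargest (fun i => |ν i|) #S := by
        gcongr
        exact hP.sum_mul_le_sumKLargest _

end Spectral

section Graph

variable [Fintype V] (G : SimpleGraph V) [DecidableRel G.Adj]

theorem numEdges_eq : numEdges G = #G.edgeFinset := by
  unfold numEdges
  congr!

variable [DecidableEq V]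

theorem Sym2.card_filter_mem_of_not_isDiag {e : Sym2 V} (he : ¬e.IsDiag) (S : Finset V) :
    (#{v ∈ S | v ∈ e} : ℝ)
      = (if ∀ v ∈ e, v ∈ S then 1 else 0) + 1 - (if ∀ v ∈ e, v ∈ Sᶜ then 1 else 0) := by
  induction e using Sym2.ind with
  | _ x y =>
    have hxy : x ≠ y := by simpa using he
    have hfilter : {v ∈ S | v ∈ s(x, y)} = S ∩ {x, y} := by ext; simp
    rw [hfilter]
    by_cases hx : x ∈ S <;> by_cases hy : y ∈ S <;> simp [hx, hy, hxy, one_add_one_eq_two]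

theorem sum_degree_eq (S : Finset V) :
    (∑ v ∈ S, G.degree v : ℝ) = #G.edgeFinset + #{e ∈ G.edgeFinset | ∀ v ∈ e, v ∈ S}
      - #{e ∈ G.edgeFinset | ∀ v ∈ e, v ∈ Sᶜ} := by
  have hdouble : ∑ v ∈ S, G.degree v = ∑ e ∈ G.edgeFinset, #{v ∈ S | v ∈ e} := by
    simp_rw [← G.card_incidenceFinset_eq_degree, G.incidenceFinset_eq_filter]
    exact sum_card_bipartiteAbove_eq_sum_card_bipartiteBelow (fun v e => v ∈ e)
  rw [← Nat.cast_sum, hdouble, Nat.cast_sum, sum_congr rfl fun e he =>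
    Sym2.card_filter_mem_of_not_isDiag (G.not_isDiag_of_mem_edgeSet (G.mem_edgeFinset.mp he)) S]
  simp only [sum_sub_distrib, sum_add_distrib, sum_boole, sum_const, nsmul_eq_mul, mul_one]
  ring

theorem edgesWithin_eq (S : Finset V) :
    edgesWithin G S = #{e ∈ G.edgeFinset | ∀ v ∈ e, v ∈ S} := by
  unfold edgesWithin
  congr!

theorem lapEig_eq : lapEig G = (lapMatrix_isHermitian G).eigenvalues := by
  unfold lapEig
  congr!

theorem adjEig_eq : adjEig G = (adjMatrix_isHermitian G).eigenvalues := by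
  unfold adjEig
  congr!

end Graph

theorem sLap_le_kyFan_general {V : Type*} [Fintype V] [DecidableEq V] (G : SimpleGraph V)
    [DecidableRel G.Adj] (k : ℕ)
    (S : Finset V) (hcard : S.card = k)
    (hdeg : ∀ v ∈ S, ∀ w ∉ S, G.degree w ≤ G.degree v) :
    sLap G k ≤ (numEdges G : ℝ) + (edgesWithin G S : ℝ) - (edgesWithin G Sᶜ : ℝ)
      + sumKLargest (fun v => |adjEig G v|) k := by
  subst hcard
  have hspec := sumKLargest_eigenvalues_diagonal_sub_le (d := fun v => (G.degree v : ℝ))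
    (adjMatrix_isHermitian G) (lapMatrix_isHermitian G) fun v hv u hu => by
      exact_mod_cast hdeg v hv u hu
  rw [sLap, lapEig_eq, adjEig_eq, numEdges_eq, edgesWithin_eq, edgesWithin_eq,
    ← sum_degree_eq]
  exact hspec

/-- `s_k(G) ≤ m + e(S_k) - e(V∖S_k) + ‖A(G)‖_(k)` where `S_k` is a set of
`k` vertices of largest degrees and `‖A(G)‖_(k)` is the sum of the `k` largest
absolute values of adjacency eigenvalues (singular values). -/
theorem sLap_le_kyFan {V : Type*} [Fintype V] [DecidableEq V] (G : SimpleGraph V)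
    [DecidableRel G.Adj] (k : ℕ) (hk1 : 1 ≤ k) (hk2 : k ≤ Fintype.card V)
    (S : Finset V) (hcard : S.card = k)
    (hdeg : ∀ v ∈ S, ∀ w ∉ S, G.degree w ≤ G.degree v) :
    sLap G k ≤ (numEdges G : ℝ) + (edgesWithin G S : ℝ) - (edgesWithin G Sᶜ : ℝ)
      + sumKLargest (fun v => |adjEig G v|) k :=
  sLap_le_kyFan_general G k S hcard hdeg

end Brouwer
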